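/- arXiv:1411.4765 — 2 statements merged into one kernel-verified Lean document; each statement's English description precedes it below -/
import Mathlib

section
/- The function f : [0,∞) → ℝ defined by f(x) = 1/2 − (e^{−x} + x − 1)/x² for x > 0 and f(0) = 0 is monotone increasing, bounded above by 1/2, satisfies f(x) = O(x) as x → 0⁺, and its derivative is bounded by 1 for x > 0. -/
/-!
With `N(x) = (x + 2) e^{-x} + x - 2` one has `f'(x) = N(x) / x³` for `x ≠ 0`, so all four claims
reduce to polynomial bounds for `e^{-x}` on `[0, ∞)`: `0 ≤ f(x) ≤ x / 6` follows from the Taylor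
bounds `1 - x + x²/2 - x³/6 ≤ e^{-x} ≤ 1 - x + x²/2`, and `0 ≤ f' ≤ 1` from `0 ≤ N(x) ≤ x³`.
Each of these bounds vanishes at `0` and is proved by showing that its derivative has the right
sign, which in turn is a bound of the same kind of lower order.
-/

open Asymptotics

/-- The continuous extension of `x ↦ 1/2 − (e^{−x} + x − 1)/x²` by `0` at `0`. -/
noncomputable def fAux (x : ℝ) : ℝ :=
  if x = 0 then 0 else 1 / 2 - (Real.exp (-x) + x - 1) / x ^ 2

open Real Set

theorem monotoneOn_Ici_of_hasDerivAt_nonneg {f f' : ℝ → ℝ} {a : ℝ}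
    (hf : ∀ x ∈ Ici a, HasDerivAt f (f' x) x) (hf' : ∀ x ∈ Ioi a, 0 ≤ f' x) :
    MonotoneOn f (Ici a) :=
  monotoneOn_of_hasDerivWithinAt_nonneg (convex_Ici a)
    (fun x hx => (hf x hx).continuousAt.continuousWithinAt)
    (fun x hx => by
      rw [interior_Ici] at hx ⊢
      exact (hf x (mem_Ici_of_Ioi hx)).hasDerivWithinAt)
    (by simpa only [interior_Ici] using hf')

theorem hasDerivAt_exp_neg (x : ℝ) : HasDerivAt (fun y => exp (-y)) (-exp (-x)) x := by
  simpa using (hasDerivAt_neg x).exp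

theorem exp_neg_le_one_sub_add_sq_div_two {x : ℝ} (hx : 0 ≤ x) :
    exp (-x) ≤ 1 - x + x ^ 2 / 2 := by
  have hmono := monotoneOn_Ici_of_hasDerivAt_nonneg
    (f := fun y => 1 - y + y ^ 2 / 2 - exp (-y)) (f' := fun y => -1 + y + exp (-y)) (a := 0)
    (fun y _ => ((((hasDerivAt_id' y).const_sub 1).add ((hasDerivAt_pow 2 y).div_const 2)).sub
      (hasDerivAt_exp_neg y)).congr_deriv (by simp))
    (fun y _ => by linarith [one_sub_le_exp_neg y])
  have := hmono self_mem_Ici hx hx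
  simp only [neg_zero, exp_zero] at this
  linarith

theorem one_sub_add_sq_div_two_sub_cube_div_six_le_exp_neg {x : ℝ} (hx : 0 ≤ x) :
    1 - x + x ^ 2 / 2 - x ^ 3 / 6 ≤ exp (-x) := by
  have hmono := monotoneOn_Ici_of_hasDerivAt_nonneg
    (f := fun y => exp (-y) - (1 - y + y ^ 2 / 2 - y ^ 3 / 6))
    (f' := fun y => -exp (-y) + 1 - y + y ^ 2 / 2) (a := 0)
    (fun y _ => ((hasDerivAt_exp_neg y).sub ((((hasDerivAt_id' y).const_sub 1).add
      ((hasDerivAt_pow 2 y).div_const 2)).sub ((hasDerivAt_pow 3 y).div_const 6))).congr_deriv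
        (by simp; ring))
    (fun y hy => by linarith [exp_neg_le_one_sub_add_sq_div_two (le_of_lt hy)])
  have := hmono self_mem_Ici hx hx
  simp only [neg_zero, exp_zero] at this
  linarith

theorem add_one_mul_exp_neg_le_one (x : ℝ) : (x + 1) * exp (-x) ≤ 1 :=
  calc (x + 1) * exp (-x) ≤ exp x * exp (-x) :=
        mul_le_mul_of_nonneg_right (add_one_le_exp x) (exp_pos _).le
    _ = 1 := by rw [← exp_add, add_neg_cancel, exp_zero]

theorem hasDerivAt_add_two_mul_exp_neg_add_sub_two (x : ℝ) :
    HasDerivAt (fun y => (y + 2) * exp (-y) + y - 2) (1 - (x + 1) * exp (-x)) x :=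
  ((((hasDerivAt_id' x).add_const 2).mul (hasDerivAt_exp_neg x)).add
    (hasDerivAt_id' x)).sub_const 2 |>.congr_deriv (by ring)

theorem add_two_mul_exp_neg_add_sub_two_nonneg {x : ℝ} (hx : 0 ≤ x) :
    0 ≤ (x + 2) * exp (-x) + x - 2 := by
  have hmono := monotoneOn_Ici_of_hasDerivAt_nonneg (a := 0)
    (fun y _ => hasDerivAt_add_two_mul_exp_neg_add_sub_two y)
    (fun y _ => by linarith [add_one_mul_exp_neg_le_one y])
  simpa using hmono self_mem_Ici hx hx

theorem add_two_mul_exp_neg_add_sub_two_le_pow_three {x : ℝ} (hx : 0 ≤ x) :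
    (x + 2) * exp (-x) + x - 2 ≤ x ^ 3 := by
  have hmono := monotoneOn_Ici_of_hasDerivAt_nonneg (a := 0)
    (f := fun y => y ^ 3 - ((y + 2) * exp (-y) + y - 2))
    (f' := fun y => 3 * y ^ 2 - (1 - (y + 1) * exp (-y)))
    (fun y _ => ((hasDerivAt_pow 3 y).sub
      (hasDerivAt_add_two_mul_exp_neg_add_sub_two y)).congr_deriv (by simp))
    (fun y hy => by
      -- `(y + 1) e^{-y} ≥ (y + 1)(1 - y)`, so the derivative is at least `2 y²`
      have := mul_le_mul_of_nonneg_left (one_sub_le_exp_neg y) (a := y + 1)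
        (by linarith [mem_Ioi.1 hy])
      nlinarith)
  have := hmono self_mem_Ici hx hx
  simp only [neg_zero, exp_zero] at this
  linarith

theorem fAux_of_ne_zero {x : ℝ} (hx : x ≠ 0) :
    fAux x = 1 / 2 - (exp (-x) + x - 1) / x ^ 2 :=
  if_neg hx

theorem hasDerivAt_fAux {x : ℝ} (hx : x ≠ 0) :
    HasDerivAt fAux (((x + 2) * exp (-x) + x - 2) / x ^ 3) x := by
  have hfAux : (fun y => 1 / 2 - (exp (-y) + y - 1) / y ^ 2) =ᶠ[nhds x] fAux := by
    filter_upwards [eventually_ne_nhds hx] with y hy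
    exact (fAux_of_ne_zero hy).symm
  refine HasDerivAt.congr_of_eventuallyEq ?_ hfAux.symm
  refine ((((hasDerivAt_exp_neg x).add (hasDerivAt_id' x)).sub_const 1).div
    (hasDerivAt_pow 2 x) (pow_ne_zero 2 hx)).const_sub (1 / 2) |>.congr_deriv ?_
  simp only [Pi.add_apply]
  field_simp
  ring

theorem fAux_nonneg {x : ℝ} (hx : 0 ≤ x) : 0 ≤ fAux x := by
  rcases hx.eq_or_lt with rfl | hx
  · simp [fAux]
  rw [fAux_of_ne_zero hx.ne', sub_nonneg, div_le_iff₀ (by positivity)]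
  linarith [exp_neg_le_one_sub_add_sq_div_two hx.le]

theorem fAux_le_one_half {x : ℝ} (hx : 0 ≤ x) : fAux x ≤ 1 / 2 := by
  rcases hx.eq_or_lt with rfl | hx
  · simp [fAux]
  rw [fAux_of_ne_zero hx.ne', sub_le_self_iff]
  exact div_nonneg (by linarith [one_sub_le_exp_neg x]) (by positivity)

theorem fAux_le_div_six {x : ℝ} (hx : 0 ≤ x) : fAux x ≤ x / 6 := by
  rcases hx.eq_or_lt with rfl | hx
  · simp [fAux]
  have hx2 : 0 < x ^ 2 := by positivity
  rw [fAux_of_ne_zero hx.ne', sub_le_iff_le_add, ← sub_le_iff_le_add', le_div_iff₀ hx2]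
  nlinarith [one_sub_add_sq_div_two_sub_cube_div_six_le_exp_neg hx.le]

theorem monotoneOn_fAux : MonotoneOn fAux (Ici 0) := by
  intro a ha b hb hab
  rcases (mem_Ici.1 ha).eq_or_lt with rfl | ha
  · simpa [fAux] using fAux_nonneg hb
  refine monotoneOn_Ici_of_hasDerivAt_nonneg (a := a)
    (fun x hx => hasDerivAt_fAux (ha.trans_le hx).ne') (fun x hx => ?_) self_mem_Ici hab hab
  have hx : 0 < x := ha.trans hx
  exact div_nonneg (add_two_mul_exp_neg_add_sub_two_nonneg hx.le) (by positivity)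

theorem fAux_isBigO_id : fAux =O[nhdsWithin 0 (Ioi 0)] fun x => x := by
  refine isBigO_iff.2 ⟨1, ?_⟩
  filter_upwards [self_mem_nhdsWithin] with x (hx : 0 < x)
  rw [norm_of_nonneg (fAux_nonneg hx.le), norm_of_nonneg hx.le]
  linarith [fAux_le_div_six hx.le]

theorem abs_deriv_fAux_le_one {x : ℝ} (hx : 0 < x) : |deriv fAux x| ≤ 1 := by
  have hx3 : 0 < x ^ 3 := by positivity
  rw [(hasDerivAt_fAux hx.ne').deriv,
    abs_of_nonneg (div_nonneg (add_two_mul_exp_neg_add_sub_two_nonneg hx.le) hx3.le),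
    div_le_one hx3]
  exact add_two_mul_exp_neg_add_sub_two_le_pow_three hx.le

/-- The function `f(x) = 1/2 − (e^{−x} + x − 1)/x²` (with `f(0) = 0`) is monotone increasing
on `[0, ∞)`, bounded above by `1/2`, satisfies `f(x) = O(x)` as `x → 0⁺`, and its derivative
is bounded by `1` for `x > 0`. -/
theorem fAux_properties :
    MonotoneOn fAux (Set.Ici 0) ∧
    (∀ x : ℝ, 0 ≤ x → fAux x ≤ 1 / 2) ∧
    (fAux =O[nhdsWithin 0 (Set.Ioi 0)] fun x => x) ∧
    (∀ x : ℝ, 0 < x → |deriv fAux x| ≤ 1) :=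
  ⟨monotoneOn_fAux, fun _ hx => fAux_le_one_half hx, fAux_isBigO_id,
    fun _ hx => abs_deriv_fAux_le_one hx⟩
end

section
/- The supremum over x > 0 and y ∈ [0,2] of (e^{−xy} − (1 − e^{−x})²/x²)^{2p} / x is finite, for every natural number p ≥ 1. -/
/-- For every natural number `p ≥ 1`, the supremum over `x > 0` and `y ∈ [0,2]` of
`(e^{−xy} − (1 − e^{−x})²/x²)^{2p} / x` is finite. -/
theorem sup_kernel_finite (p : ℕ) (hp : 1 ≤ p) :
    ∃ C : ℝ, ∀ x : ℝ, 0 < x → ∀ y ∈ Set.Icc (0 : ℝ) 2,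
      (Real.exp (-(x * y)) - (1 - Real.exp (-x)) ^ 2 / x ^ 2) ^ (2 * p) / x ≤ C := by
  refine ⟨4 ^ (2 * p), fun x hx y hy => ?_⟩
  obtain ⟨hy0, hy2⟩ := hy
  have hxy : 0 ≤ x * y := mul_nonneg hx.le hy0
  have ha : Real.exp (-(x * y)) ≤ 1 := Real.exp_le_one_iff.mpr (by linarith)
  have ha0 : 0 < Real.exp (-(x * y)) := Real.exp_pos _
  have ha' : 1 - 2 * x ≤ Real.exp (-(x * y)) := by
    have h1 := Real.add_one_le_exp (-(x * y))
    nlinarith [mul_le_mul_of_nonneg_left hy2 hx.le]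
  have he1 : Real.exp (-x) ≤ 1 := Real.exp_le_one_iff.mpr (by linarith)
  have he0 : 0 < Real.exp (-x) := Real.exp_pos _
  have he2 : 1 - x ≤ Real.exp (-x) := by linarith [Real.add_one_le_exp (-x)]
  have he3 : Real.exp (-x) ≤ 1 - x + x ^ 2 := by
    have h := Real.add_one_le_exp x
    have hpos := Real.exp_pos x
    rw [Real.exp_neg, inv_le_iff_one_le_mul₀ hpos]
    have hq : (0 : ℝ) ≤ 1 - x + x ^ 2 := by nlinarith [sq_nonneg (x - 1)]
    nlinarith [mul_le_mul_of_nonneg_left h hq, pow_pos hx 3]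
  have hx2 : (0 : ℝ) < x ^ 2 := by positivity
  have hg0 : 0 ≤ (1 - Real.exp (-x)) ^ 2 / x ^ 2 := div_nonneg (sq_nonneg _) hx2.le
  have hg1 : (1 - Real.exp (-x)) ^ 2 / x ^ 2 ≤ 1 := by
    rw [div_le_one hx2]; nlinarith
  have hg2 : 1 - 2 * x ≤ (1 - Real.exp (-x)) ^ 2 / x ^ 2 := by
    rw [le_div_iff₀ hx2]
    nlinarith [sq_nonneg (1 - Real.exp (-x) - x + x ^ 2), sq_nonneg (x - x ^ 2)]
  set D := Real.exp (-(x * y)) - (1 - Real.exp (-x)) ^ 2 / x ^ 2 with hD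
  have heven : Even (2 * p) := even_two_mul p
  have hDpow : D ^ (2 * p) = |D| ^ (2 * p) := by
    rw [pow_abs, abs_of_nonneg (heven.pow_nonneg D)]
  have habs2x : |D| ≤ 2 * x := abs_le.mpr ⟨by simp only [hD]; linarith, by simp only [hD]; linarith⟩
  have habs1 : |D| ≤ 1 := abs_le.mpr ⟨by simp only [hD]; linarith, by simp only [hD]; linarith⟩
  have hC1 : (1 : ℝ) ≤ 4 ^ (2 * p) := one_le_pow₀ (by norm_num)
  rcases le_or_gt x 1 with hx1 | hx1
  · have h1 : |D| ^ (2 * p) ≤ (2 * x) ^ (2 * p) := pow_le_pow_left₀ (abs_nonneg D) habs2x _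
    have hxp : x ^ (2 * p) ≤ x := pow_le_of_le_one hx.le hx1 (by omega)
    have h2 : (2 * x) ^ (2 * p) ≤ 4 ^ (2 * p) * x := by
      rw [mul_pow]
      calc 2 ^ (2 * p) * x ^ (2 * p) ≤ 2 ^ (2 * p) * x :=
            mul_le_mul_of_nonneg_left hxp (by positivity)
        _ ≤ 4 ^ (2 * p) * x :=
            mul_le_mul_of_nonneg_right (pow_le_pow_left₀ (by norm_num) (by norm_num) _) hx.le
    rw [div_le_iff₀ hx, hDpow]
    exact h1.trans h2
  · have h1 : |D| ^ (2 * p) ≤ 1 := pow_le_one₀ (abs_nonneg D) habs1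
    rw [hDpow, div_le_iff₀ hx]
    nlinarith
end
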